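/- arXiv:1907.04435 — 4 statements merged into one kernel-verified Lean document; each statement's English description precedes it below -/
import Mathlib

section
/- Let V be a real inner product space, let s ∈ V, let d₁, u ∈ V be orthonormal vectors, and let δ > 0. Fix θ with 0 < θ < π/2, and for an angle φ let d(φ) = cos φ • d₁ + sin φ • u be the interpolated light direction at angle φ from d₁ toward d(θ). Let p₁ = s + δ • d₁ and pₙ = s + (δ / cos θ) • d(θ) be the shadows of s cast along d₁ = d(0) and along d(θ). Then for every φ with 0 ≤ φ < π/2, the shadow of s cast along d(φ), namely s + (δ / cos φ) • d(φ), equals p₁ + (tan φ / tan θ) • (pₙ − p₁). -/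
open scoped RealInnerProductSpace

/-- With orthonormal `d₁`, `u`, distance `δ > 0` to the shadow plane, a total
rotation angle `0 < θ < π/2`, interpolated light directions
`d(φ) = cos φ • d₁ + sin φ • u`, and shadow endpoints `p₁ = s + δ • d₁` and
`pₙ = s + (δ / cos θ) • d(θ)`, the shadow of `s` cast along `d(φ)` for any `0 ≤ φ < π/2`
equals `p₁ + (tan φ / tan θ) • (pₙ - p₁)`. -/
theorem shadow_interpolation_formula
    {V : Type*} [NormedAddCommGroup V] [InnerProductSpace ℝ V]
    (s d₁ u : V) (hd₁ : ‖d₁‖ = 1) (hu : ‖u‖ = 1) (hortho : ⟪d₁, u⟫ = 0)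
    (δ : ℝ) (hδ : 0 < δ) (θ : ℝ) (hθ0 : 0 < θ) (hθ : θ < Real.pi / 2) :
    ∀ φ : ℝ, 0 ≤ φ → φ < Real.pi / 2 →
      s + (δ / Real.cos φ) • (Real.cos φ • d₁ + Real.sin φ • u) =
        (s + δ • d₁) + (Real.tan φ / Real.tan θ) •
          ((s + (δ / Real.cos θ) • (Real.cos θ • d₁ + Real.sin θ • u)) - (s + δ • d₁)) := by
  intro φ hφ0 hφ
  have hcφ : Real.cos φ ≠ 0 :=
    ne_of_gt (Real.cos_pos_of_mem_Ioo ⟨lt_of_lt_of_le (by linarith [Real.pi_pos]) hφ0, hφ⟩)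
  have hcθ : Real.cos θ ≠ 0 :=
    ne_of_gt (Real.cos_pos_of_mem_Ioo ⟨by linarith [Real.pi_pos], hθ⟩)
  have hsθ : Real.sin θ ≠ 0 :=
    ne_of_gt (Real.sin_pos_of_pos_of_lt_pi hθ0 (by linarith [Real.pi_pos]))
  rw [Real.tan_eq_sin_div_cos, Real.tan_eq_sin_div_cos]
  field_simp
  match_scalars <;> field_simp <;> ring
end

section
/- Let V be a real inner product space, let s ∈ V, let d₁, u ∈ V be orthonormal vectors, and let δ > 0. Fix θ with 0 < θ < π/2, let d(φ) = cos φ • d₁ + sin φ • u, and let p₁ = s + δ • d₁ and pₙ = s + (δ / cos θ) • d(θ). Let n ≥ 2 and for each i ∈ {0, 1, …, n−1} set φᵢ = i·θ/(n−1). Then for every i, the point stored in the i-th slice of the shadow accrual map, p₁ + (tan φᵢ / tan θ) • (pₙ − p₁), is exactly the shadow of s cast along the direction d(φᵢ), i.e. it equals s + (δ / cos φᵢ) • d(φᵢ), and the depth stored there, the distance from s to this point, equals δ / cos φᵢ. Hence the shadow accrual map computed for the time interval processes, for each of the n time steps, exactly the same shadow point with the same depth as a standard shadow map computed independently for the light direction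 of that time step. -/
open scoped RealInnerProductSpace

/-- Theorem 1 of the paper: For a time interval divided into `n ≥ 2` time
steps with angles `φᵢ = i·θ/(n-1)`, the point stored in the `i`-th slice of the shadow
accrual map, `p₁ + (tan φᵢ / tan θ) • (pₙ - p₁)`, equals the shadow of `s` cast along
`d(φᵢ)`, i.e. `s + (δ / cos φᵢ) • d(φᵢ)`, and the depth stored there (the distance from
`s` to this point) equals `δ / cos φᵢ`. Hence the shadow accrual map coincides, slice by
slice, with the `n` independently-computed shadow maps. -/
theorem shadow_accrual_map_eq_shadow_maps
    {V : Type*} [NormedAddCommGroup V] [InnerProductSpace ℝ V]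
    (s d₁ u : V) (hd₁ : ‖d₁‖ = 1) (hu : ‖u‖ = 1) (hortho : ⟪d₁, u⟫ = 0)
    (δ : ℝ) (hδ : 0 < δ) (θ : ℝ) (hθ0 : 0 < θ) (hθ : θ < Real.pi / 2)
    (n : ℕ) (hn : 2 ≤ n) :
    ∀ i : ℕ, i < n →
      ((s + δ • d₁) + (Real.tan ((i : ℝ) * θ / ((n : ℝ) - 1)) / Real.tan θ) •
          ((s + (δ / Real.cos θ) • (Real.cos θ • d₁ + Real.sin θ • u)) - (s + δ • d₁)) =
        s + (δ / Real.cos ((i : ℝ) * θ / ((n : ℝ) - 1))) •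
          (Real.cos ((i : ℝ) * θ / ((n : ℝ) - 1)) • d₁ +
            Real.sin ((i : ℝ) * θ / ((n : ℝ) - 1)) • u)) ∧
      dist s ((s + δ • d₁) + (Real.tan ((i : ℝ) * θ / ((n : ℝ) - 1)) / Real.tan θ) •
          ((s + (δ / Real.cos θ) • (Real.cos θ • d₁ + Real.sin θ • u)) - (s + δ • d₁)))
        = δ / Real.cos ((i : ℝ) * θ / ((n : ℝ) - 1)) := by
  intro i hi
  have hn1 : (1:ℝ) ≤ (n:ℝ) - 1 := by
    have : (2:ℝ) ≤ (n:ℝ) := by exact_mod_cast hn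
    linarith
  set φ : ℝ := (i : ℝ) * θ / ((n : ℝ) - 1) with hφdef
  have hφ0 : 0 ≤ φ := by
    apply div_nonneg (mul_nonneg (Nat.cast_nonneg i) hθ0.le) (by linarith)
  have hφθ : φ ≤ θ := by
    rw [hφdef, div_le_iff₀ (by linarith : (0:ℝ) < (n:ℝ) - 1)]
    have hi' : (i:ℝ) ≤ (n:ℝ) - 1 := by
      have : (i:ℝ) + 1 ≤ (n:ℝ) := by exact_mod_cast hi
      linarith
    nlinarith
  have hcθ : 0 < Real.cos θ := Real.cos_pos_of_mem_Ioo ⟨by linarith [Real.pi_pos], hθ⟩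
  have hcφ : 0 < Real.cos φ := Real.cos_pos_of_mem_Ioo ⟨by linarith [Real.pi_pos], by linarith⟩
  have hsθ : 0 < Real.sin θ := Real.sin_pos_of_pos_of_lt_pi hθ0 (by linarith [Real.pi_pos])
  have heq : ((s + δ • d₁) + (Real.tan φ / Real.tan θ) •
          ((s + (δ / Real.cos θ) • (Real.cos θ • d₁ + Real.sin θ • u)) - (s + δ • d₁)) =
        s + (δ / Real.cos φ) • (Real.cos φ • d₁ + Real.sin φ • u)) := by
    rw [Real.tan_eq_sin_div_cos, Real.tan_eq_sin_div_cos]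
    match_scalars <;> field_simp <;> ring
  refine ⟨heq, ?_⟩
  rw [heq]
  have hnormv : ‖Real.cos φ • d₁ + Real.sin φ • u‖ = 1 := by
    have h2 : ‖Real.cos φ • d₁ + Real.sin φ • u‖ ^ 2 = 1 := by
      rw [norm_add_sq_real, norm_smul, norm_smul, inner_smul_left, inner_smul_right,
        hortho, hd₁, hu]
      simp [mul_pow, sq_abs, Real.sin_sq_add_cos_sq φ]
    nlinarith [norm_nonneg (Real.cos φ • d₁ + Real.sin φ • u)]
  rw [dist_eq_norm]
  simp only [sub_add_cancel_left, norm_neg, norm_smul, hnormv, mul_one,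
    Real.norm_eq_abs]
  exact abs_of_pos (div_pos hδ hcφ)
end

section
/- Let V be a real inner product space, let s ∈ V, let d₁, u ∈ V be orthonormal vectors, and let δ > 0. Fix θ with 0 < θ < π/2, let d(φ) = cos φ • d₁ + sin φ • u, and let p₁ = s + δ • d₁ and pₙ = s + (δ / cos θ) • d(θ). Then for every φ with 0 ≤ φ ≤ θ, the shadow of s cast along d(φ), namely s + (δ / cos φ) • d(φ), lies on the closed segment joining p₁ and pₙ. -/
/-!
The shadow cast along `d(ψ)` is `p₁ + tan ψ • (δ • u)`, an affine function of `tan ψ`. Since `tan`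
is monotone on `[0, θ] ⊆ (-π/2, π/2)`, `tan φ` lies between `tan 0 = 0` and `tan θ`, and affine
maps send segments onto segments.
-/

open Real
open scoped RealInnerProductSpace

theorem add_smul_mem_segment_of_mem_segment {𝕜 E : Type*}
    [Ring 𝕜] [PartialOrder 𝕜] [AddRightMono 𝕜] [AddCommGroup E] [Module 𝕜 E]
    {a v : E} {t₁ t₂ t : 𝕜} (ht : t ∈ segment 𝕜 t₁ t₂) :
    a + t • v ∈ segment 𝕜 (a + t₁ • v) (a + t₂ • v) := by
  have hlineMap : ∀ r : 𝕜, AffineMap.lineMap a (a + v) r = a + r • v := fun r => by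
    rw [AffineMap.lineMap_apply_module', add_sub_cancel_left, add_comm]
  rw [← hlineMap, ← hlineMap, ← hlineMap, ← image_segment]
  exact Set.mem_image_of_mem _ ht

theorem Real.tan_mem_segment_zero_tan {φ θ : ℝ} (hφ : 0 ≤ φ) (hφθ : φ ≤ θ) (hθ : θ < π / 2) :
    tan φ ∈ segment ℝ 0 (tan θ) := by
  have hmem : ∀ {x}, 0 ≤ x → x ≤ θ → x ∈ Set.Ioo (-(π / 2)) (π / 2) := fun hx hxθ =>
    ⟨by linarith [pi_pos], by linarith⟩
  rw [segment_eq_uIcc, ← tan_zero]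
  exact Set.mem_uIcc_of_le
    (strictMonoOn_tan.monotoneOn (hmem le_rfl (hφ.trans hφθ)) (hmem hφ hφθ) hφ)
    (strictMonoOn_tan.monotoneOn (hmem hφ hφθ) (hmem (hφ.trans hφθ) le_rfl) hφθ)

theorem shadow_eq_add_tan_smul {E : Type*} [AddCommGroup E] [Module ℝ E]
    (s d₁ u : E) (δ : ℝ) {ψ : ℝ} (hψ : cos ψ ≠ 0) :
    s + (δ / cos ψ) • (cos ψ • d₁ + sin ψ • u) = s + δ • d₁ + tan ψ • δ • u := by
  rw [tan_eq_sin_div_cos]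
  match_scalars <;> field_simp

theorem shadow_lies_on_segment_general
    {V : Type*} [NormedAddCommGroup V] [InnerProductSpace ℝ V]
    (s d₁ u : V)
    (δ : ℝ) (θ : ℝ) (hθ : θ < Real.pi / 2) :
    ∀ φ : ℝ, 0 ≤ φ → φ ≤ θ →
      s + (δ / Real.cos φ) • (Real.cos φ • d₁ + Real.sin φ • u) ∈
        segment ℝ (s + δ • d₁)
          (s + (δ / Real.cos θ) • (Real.cos θ • d₁ + Real.sin θ • u)) := by
  intro φ hφ0 hφθ
  have hcos : ∀ {ψ}, 0 ≤ ψ → ψ ≤ θ → cos ψ ≠ 0 := fun hψ0 hψθ =>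
    (cos_pos_of_mem_Ioo ⟨by linarith [pi_pos], by linarith⟩).ne'
  rw [shadow_eq_add_tan_smul s d₁ u δ (hcos hφ0 hφθ),
    shadow_eq_add_tan_smul s d₁ u δ (hcos (hφ0.trans hφθ) le_rfl)]
  simpa only [zero_smul, add_zero] using
    add_smul_mem_segment_of_mem_segment (a := s + δ • d₁) (v := δ • u)
      (tan_mem_segment_zero_tan hφ0 hφθ hθ)

/-- As the light direction rotates from `d₁ = d(0)` to `d(θ)`, the shadow of
`s` cast along `d(φ)` for any `0 ≤ φ ≤ θ` lies on the closed segment joining the initial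
shadow `p₁ = s + δ • d₁` and the final shadow `pₙ = s + (δ / cos θ) • d(θ)`. -/
theorem shadow_lies_on_segment
    {V : Type*} [NormedAddCommGroup V] [InnerProductSpace ℝ V]
    (s d₁ u : V) (hd₁ : ‖d₁‖ = 1) (hu : ‖u‖ = 1) (hortho : ⟪d₁, u⟫ = 0)
    (δ : ℝ) (hδ : 0 < δ) (θ : ℝ) (hθ0 : 0 < θ) (hθ : θ < Real.pi / 2) :
    ∀ φ : ℝ, 0 ≤ φ → φ ≤ θ →
      s + (δ / Real.cos φ) • (Real.cos φ • d₁ + Real.sin φ • u) ∈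
        segment ℝ (s + δ • d₁)
          (s + (δ / Real.cos θ) • (Real.cos θ • d₁ + Real.sin θ • u)) :=
  shadow_lies_on_segment_general s d₁ u δ θ hθ
end

section
/- Let V be a real inner product space, let s ∈ V, let d₁, u ∈ V be orthonormal vectors, and let δ > 0. Fix θ with 0 < θ < π/2, let d(φ) = cos φ • d₁ + sin φ • u, and let p₁ = s + δ • d₁ and pₙ = s + (δ / cos θ) • d(θ). Then every point q on the closed segment joining p₁ and pₙ is the shadow of s cast along some interpolated direction: there exists φ with 0 ≤ φ ≤ θ such that q = s + (δ / cos φ) • d(φ). Consequently, the set of shadows of s over all directions d(φ), 0 ≤ φ ≤ θ, is exactly the closed segment from p₁ to pₙ. -/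
open scoped RealInnerProductSpace

/-- Every point on the closed segment from the initial shadow
`p₁ = s + δ • d₁` to the final shadow `pₙ = s + (δ / cos θ) • d(θ)` is the shadow of `s`
cast along some interpolated direction `d(φ)` with `0 ≤ φ ≤ θ`; consequently the set of
shadows of `s` over all `φ ∈ [0, θ]` is exactly that closed segment. -/
theorem segment_eq_shadow_set
    {V : Type*} [NormedAddCommGroup V] [InnerProductSpace ℝ V]
    (s d₁ u : V) (hd₁ : ‖d₁‖ = 1) (hu : ‖u‖ = 1) (hortho : ⟪d₁, u⟫ = 0)
    (δ : ℝ) (hδ : 0 < δ) (θ : ℝ) (hθ0 : 0 < θ) (hθ : θ < Real.pi / 2) :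
    (∀ q ∈ segment ℝ (s + δ • d₁)
        (s + (δ / Real.cos θ) • (Real.cos θ • d₁ + Real.sin θ • u)),
      ∃ φ : ℝ, 0 ≤ φ ∧ φ ≤ θ ∧
        q = s + (δ / Real.cos φ) • (Real.cos φ • d₁ + Real.sin φ • u)) ∧
    {x : V | ∃ φ : ℝ, 0 ≤ φ ∧ φ ≤ θ ∧
        x = s + (δ / Real.cos φ) • (Real.cos φ • d₁ + Real.sin φ • u)} =
      segment ℝ (s + δ • d₁)
        (s + (δ / Real.cos θ) • (Real.cos θ • d₁ + Real.sin θ • u)) := by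
  have hpi2 : 0 < Real.pi / 2 := by positivity
  -- key rewriting lemma
  have key : ∀ φ : ℝ, -(Real.pi/2) < φ → φ < Real.pi/2 →
      s + (δ / Real.cos φ) • (Real.cos φ • d₁ + Real.sin φ • u)
        = (s + δ • d₁) + (δ * Real.tan φ) • u := by
    intro φ h1 h2
    have hc : 0 < Real.cos φ := Real.cos_pos_of_mem_Ioo ⟨h1, h2⟩
    rw [smul_add, smul_smul, smul_smul, div_mul_cancel₀ _ hc.ne',
      Real.tan_eq_sin_div_cos]
    rw [add_assoc]
    congr 2
    ring
  have hθ2 : -(Real.pi/2) < θ := by linarith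
  have htanθ : 0 < Real.tan θ := Real.tan_pos_of_pos_of_lt_pi_div_two hθ0 hθ
  have hθa := key θ hθ2 hθ
  have hfwd : ∀ q ∈ segment ℝ (s + δ • d₁)
        (s + (δ / Real.cos θ) • (Real.cos θ • d₁ + Real.sin θ • u)),
      ∃ φ : ℝ, 0 ≤ φ ∧ φ ≤ θ ∧
        q = s + (δ / Real.cos φ) • (Real.cos φ • d₁ + Real.sin φ • u) := by
    intro q hq
    rw [hθa, segment_eq_image'] at hq
    obtain ⟨t, ⟨ht0, ht1⟩, rfl⟩ := hq
    refine ⟨Real.arctan (t * Real.tan θ), by rw [← Real.arctan_zero]; exact Real.arctan_strictMono.monotone (by positivity), ?_, ?_⟩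
    · have : Real.arctan (t * Real.tan θ) ≤ Real.arctan (Real.tan θ) :=
        Real.arctan_strictMono.monotone (by nlinarith)
      rwa [Real.arctan_tan hθ2 hθ] at this
    · rw [key _ (Real.neg_pi_div_two_lt_arctan _) (Real.arctan_lt_pi_div_two _),
        Real.tan_arctan]
      simp [add_assoc, smul_smul]
      ring_nf
  refine ⟨hfwd, Set.Subset.antisymm ?_ ?_⟩
  · rintro x ⟨φ, hφ0, hφθ, rfl⟩
    have hφlt : φ < Real.pi / 2 := lt_of_le_of_lt hφθ hθ
    have hφ2 : -(Real.pi/2) < φ := by linarith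
    rw [key φ hφ2 hφlt, hθa, segment_eq_image']
    have htanφ : 0 ≤ Real.tan φ := Real.tan_nonneg_of_nonneg_of_le_pi_div_two hφ0 hφlt.le
    have hmono : Real.tan φ ≤ Real.tan θ := by
      rcases eq_or_lt_of_le hφθ with h | h
      · rw [h]
      · exact (Real.tan_lt_tan_of_nonneg_of_lt_pi_div_two hφ0 hθ h).le
    refine ⟨Real.tan φ / Real.tan θ, ⟨by positivity, div_le_one_of_le₀ hmono htanθ.le⟩, ?_⟩
    simp only [add_sub_cancel_left, smul_smul]
    have hs : Real.tan φ / Real.tan θ * (δ * Real.tan θ) = δ * Real.tan φ := by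
      field_simp
    rw [hs]
  · intro q hq
    obtain ⟨φ, h0, h1, h2⟩ := hfwd q hq
    exact ⟨φ, h0, h1, h2⟩
end
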